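/- Let b : ℝ → ℍ and let Ψ : ℝ → ℍ be twice differentiable with Ψ(x) ≠ 0 for all x ∈ ℝ, satisfying Ψ''(x) = b(x) * Ψ(x) for all x. Then u(x) := Ψ'(x) * (Ψ(x))⁻¹ is differentiable and satisfies the quaternionic Riccati equation u'(x) = −u(x)·u(x) + b(x) for all x ∈ ℝ. In particular, for the zero-energy stationary quaternionic Schrödinger equation in 1+1 dimensions, where b(x) = (2m/ℏ²)·(V(x) + k·W(x)) with a real potential V and a complex potential W, the logarithmic derivative u = Ψ'Ψ⁻¹ of the wave function satisfies the quaternionic Riccati equation u' = −u² + (2m/ℏ²)(V + kW). -/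

import Mathlib

open scoped Quaternion

/-! Differentiating `u = Ψ' Ψ⁻¹` with the product rule and the noncommutative rule
`(Ψ⁻¹)' = -Ψ⁻¹ Ψ' Ψ⁻¹` gives `u' = Ψ'' Ψ⁻¹ - Ψ' Ψ⁻¹ Ψ' Ψ⁻¹ = b - u²`, once `Ψ'' = b Ψ`.
The order of the factors is all that matters, so the argument runs in any normed division
algebra. -/

section NormedDivisionAlgebra

variable {𝕜 R : Type*} [NontriviallyNormedField 𝕜] [NormedDivisionRing R] [NormedAlgebra 𝕜 R]

theorem HasDerivAt.inv' {f : 𝕜 → R} {f' : R} {x : 𝕜} (hf : HasDerivAt f f' x)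
    (hx : f x ≠ 0) : HasDerivAt (fun y => (f y)⁻¹) (-((f x)⁻¹ * f' * (f x)⁻¹)) x :=
  (hasFDerivAt_inv' hx).comp_hasDerivAt x hf

theorem HasDerivAt.mul_inv' {f g : 𝕜 → R} {f' g' : R} {x : 𝕜} (hg : HasDerivAt g g' x)
    (hf : HasDerivAt f f' x) (hx : f x ≠ 0) :
    HasDerivAt (fun y => g y * (f y)⁻¹)
      (g' * (f x)⁻¹ - g x * (f x)⁻¹ * (f' * (f x)⁻¹)) x :=
  (hg.mul (hf.inv' hx)).congr_deriv (by noncomm_ring)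

theorem HasDerivAt.riccati_mul_inv {f f' b : 𝕜 → R} {x : 𝕜} (hf : HasDerivAt f (f' x) x)
    (hf' : HasDerivAt f' (b x * f x) x) (hx : f x ≠ 0) :
    HasDerivAt (fun y => f' y * (f y)⁻¹)
      (-((f' x * (f x)⁻¹) * (f' x * (f x)⁻¹)) + b x) x := by
  convert hf'.mul_inv' hf hx using 1
  rw [mul_inv_cancel_right₀ hx, neg_add_eq_sub]

end NormedDivisionAlgebra

/-- For the (zero-energy stationary) quaternionic Schrödinger equation in 1+1
dimensions, written as `Ψ'' = b Ψ` with `b = (2m/ℏ²)(V + kW)`, the logarithmic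
derivative `u = Ψ' Ψ⁻¹` of a nonvanishing wave function satisfies the quaternionic
Riccati equation `u' = −u² + b`. -/
theorem quaternionic_schrodinger_to_riccati
    (b : ℝ → ℍ[ℝ]) (Ψ Ψ' : ℝ → ℍ[ℝ])
    (hΨ : ∀ x, Ψ x ≠ 0)
    (hΨ' : ∀ x, HasDerivAt Ψ (Ψ' x) x)
    (hΨ'' : ∀ x, HasDerivAt Ψ' (b x * Ψ x) x) :
    ∀ x, HasDerivAt (fun x => Ψ' x * (Ψ x)⁻¹)
      (-((Ψ' x * (Ψ x)⁻¹) * (Ψ' x * (Ψ x)⁻¹)) + b x) x :=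
  fun x => (hΨ' x).riccati_mul_inv (hΨ'' x) (hΨ x)
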